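/- arXiv:math/9904059 — 2 statements merged into one kernel-verified Lean document; each statement's English description precedes it below -/
import Mathlib

section
/- Let f(x₁,…,xₙ) = x₁^d + ⋯ + xₙ^d with n > 3, and let n = n₁ + n₂ be a partition with n₁, n₂ ≥ 2. Consider Fermat hypersurfaces X₁ = {x₀^d + x₁^d + ⋯ + x_{n₁}^d = 0} and X₂ = {y₀^d + y₁^d + ⋯ + y_{n₂}^d = 0} in projective spaces ℙ^{n₁} and ℙ^{n₂}. The map sending ((x₀:…:x_{n₁}), (y₀:…:y_{n₂})) to (y₀x₁ : … : y₀x_{n₁} : x₀y₁ : … : x₀y_{n₂}) restricts to a well-defined rational map from X₁ × X₂ to the Fermat hypersurface X = {z₁^d + ⋯ + z_{n₁}^d - w₁^d - ⋯ - w_{n₂}^d = 0} ⊂ ℙ^{n-1} (up to sign conventions), i.e., the image of any point of X₁ × X₂ with (x₀, y₀) ≠ (0,0) satisfies the defining equation of X. -/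
/-- The twist map for Fermat hypersurfaces: if `(x₀:…:x_{n₁})` lies on the Fermat hypersurface
`∑ xᵢ^d = 0` and `(y₀:…:y_{n₂})` on `∑ yⱼ^d = 0`, with `(x₀,y₀) ≠ (0,0)`, then the point
`(y₀x₁ : … : y₀x_{n₁} : x₀y₁ : … : x₀y_{n₂})` satisfies
`∑ zᵢ^d - ∑ wⱼ^d = 0`, the defining equation of the Fermat hypersurface in ℙ^{n₁+n₂-1}. -/
theorem stmt_1 (d n₁ n₂ : ℕ) (hn : 3 < n₁ + n₂) (h₁ : 2 ≤ n₁) (h₂ : 2 ≤ n₂)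
    (x : Fin (n₁ + 1) → ℂ) (y : Fin (n₂ + 1) → ℂ)
    (hx : ∑ i, x i ^ d = 0) (hy : ∑ j, y j ^ d = 0)
    (h0 : ¬(x 0 = 0 ∧ y 0 = 0)) :
    (∑ i : Fin n₁, (y 0 * x i.succ) ^ d) - (∑ j : Fin n₂, (x 0 * y j.succ) ^ d) = 0 := by
  rw [Fin.sum_univ_succ] at hx hy
  simp only [mul_pow, ← Finset.mul_sum]
  have hx' : ∑ i : Fin n₁, x i.succ ^ d = -x 0 ^ d := by linear_combination hx
  have hy' : ∑ j : Fin n₂, y j.succ ^ d = -y 0 ^ d := by linear_combination hy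
  rw [hx', hy']; ring
end

section
/- Let ζ₆₆ be a primitive 66-th root of unity. The transformation g(x,y,t) = (ζ₆₆²x, ζ₆₆³y, ζ₆₆⁶t) maps the affine surface {y² = x³ + t·∏ᵢ₌₁¹¹(t - ζ₁₁ⁱ)} to itself, where ζ₁₁ = ζ₆₆⁶ is a primitive 11-th root of unity, and g has order 66. -/
/-- Kondo's automorphism: for a primitive 66-th root of unity `ζ`, the map
`g(x,y,t) = (ζ²x, ζ³y, ζ⁶t)` preserves the affine surface
`y² = x³ + t·∏_{i=1}^{11}(t - ζ₁₁ⁱ)` where `ζ₁₁ = ζ⁶` is a primitive 11-th root of unity,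
and `g` has order 66. -/
theorem stmt_12 (ζ : ℂ) (hζ : IsPrimitiveRoot ζ 66) :
    IsPrimitiveRoot (ζ ^ 6) 11 ∧
    (∀ x y t : ℂ,
      y ^ 2 = x ^ 3 + t * ∏ i ∈ Finset.range 11, (t - (ζ ^ 6) ^ (i + 1)) →
      (ζ ^ 3 * y) ^ 2
        = (ζ ^ 2 * x) ^ 3
          + (ζ ^ 6 * t) * ∏ i ∈ Finset.range 11, (ζ ^ 6 * t - (ζ ^ 6) ^ (i + 1))) ∧
    (∀ k : ℕ, 0 < k →
      ((ζ ^ 2) ^ k = 1 ∧ (ζ ^ 3) ^ k = 1 ∧ (ζ ^ 6) ^ k = 1 → 66 ∣ k)) := by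
  have h66 : ζ ^ 66 = 1 := hζ.pow_eq_one
  refine ⟨hζ.pow (by norm_num) (by norm_num : 66 = 6 * 11), ?_, ?_⟩
  · intro x y t h
    have hfac : ∀ i : ℕ, ζ ^ 6 * t - (ζ ^ 6) ^ (i + 1) = ζ ^ 6 * (t - (ζ ^ 6) ^ i) := by
      intro i; ring
    have hprod : ∏ i ∈ Finset.range 11, (ζ ^ 6 * t - (ζ ^ 6) ^ (i + 1))
        = (ζ ^ 6) ^ 11 * ∏ i ∈ Finset.range 11, (t - (ζ ^ 6) ^ i) := by
      rw [Finset.prod_congr rfl (fun i _ => hfac i), Finset.prod_mul_distrib,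
        Finset.prod_const, Finset.card_range]
    have hz : (ζ ^ 6) ^ 11 = 1 := by rw [← pow_mul]; exact h66
    have hshift : ∏ i ∈ Finset.range 11, (t - (ζ ^ 6) ^ i)
        = ∏ i ∈ Finset.range 11, (t - (ζ ^ 6) ^ (i + 1)) := by
      rw [Finset.prod_range_succ']
      conv_rhs => rw [Finset.prod_range_succ]
      norm_num [hz]
    rw [hprod, hz, one_mul, hshift]
    have : (ζ ^ 3) ^ 2 = ζ ^ 6 := by ring
    calc (ζ ^ 3 * y) ^ 2 = ζ ^ 6 * y ^ 2 := by ring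
      _ = ζ ^ 6 * (x ^ 3 + t * ∏ i ∈ Finset.range 11, (t - (ζ ^ 6) ^ (i + 1))) := by rw [h]
      _ = (ζ ^ 2 * x) ^ 3 + ζ ^ 6 * t * ∏ i ∈ Finset.range 11, (t - (ζ ^ 6) ^ (i + 1)) := by
          ring
  · rintro k hk ⟨h2, h3, -⟩
    have h2' : ζ ^ (2 * k) = 1 := by rw [pow_mul]; exact h2
    have h3' : ζ ^ (3 * k) = 1 := by rw [pow_mul]; exact h3
    have hk1 : ζ ^ k = 1 := by
      have : ζ ^ (3 * k) = ζ ^ (2 * k) * ζ ^ k := by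
        rw [← pow_add]; ring_nf
      rw [h3', h2', one_mul] at this
      exact this.symm
    exact hζ.dvd_of_pow_eq_one k hk1
end
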